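/- Let Z₁,…,Zₙ be i.i.d. real random variables with Zᵢ ≤ 0 a.s. and E[Z₁²] < ∞, let λ > 0, δ ∈ (0,1], and set R = E[Z₁] and R̂_λ = −(1/(nλ))∑ᵢ log(1 − λZᵢ). With probability at least 1 − δ: R − R̂_λ ≤ log(2/δ)/(λn) and R̂_λ − R ≤ λ·E[Z₁²/(1 − λZ₁)] + log(2/δ)/(λn). In particular, choosing λ* = √(log(2/δ)/(n E[Z₁²])) gives |R − R̂_{λ*}| ≤ 2√(E[Z₁²] log(2/δ)/n). -/

import Mathlib

/-!
Put `Xᵢ = log (1 - λ Zᵢ) ≥ 0`, so that `R̂_λ = -(1 / (nλ)) ∑ Xᵢ`. Both moment generating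
functions of `Xᵢ` at `±1` are explicit: `exp Xᵢ = 1 - λ Zᵢ`, and
`exp (-Xᵢ) = 1 / (1 - λ Zᵢ) = 1 + λ Zᵢ + λ² Zᵢ² / (1 - λ Zᵢ)`. With `1 + x ≤ exp x` they are
bounded by `exp (-λR)` and `exp (λR + λ² E[Z² / (1 - λZ)])`, and Chernoff's bound for the
independent sum at `t = 1` and `t = -1` gives each one-sided deviation of size
`log (2/δ) / (λn)` probability at most `δ/2`. For `λ*`, `E[Z² / (1 - λZ)] ≤ E[Z²]` and both
error terms equal `λ* E[Z²] = √(E[Z²] log (2/δ) / n)`.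
-/

open MeasureTheory ProbabilityTheory Real

lemma one_le_one_sub_mul {l z : ℝ} (hl : 0 ≤ l) (hz : z ≤ 0) : 1 ≤ 1 - l * z := by
  nlinarith

lemma sq_div_one_sub_mul_le_sq {l z : ℝ} (hl : 0 ≤ l) (hz : z ≤ 0) :
    z ^ 2 / (1 - l * z) ≤ z ^ 2 :=
  div_le_self (sq_nonneg z) (one_le_one_sub_mul hl hz)

lemma inv_one_sub_mul_eq {l z : ℝ} (hz : 1 - l * z ≠ 0) :
    (1 - l * z)⁻¹ = 1 + l * z + l ^ 2 * (z ^ 2 / (1 - l * z)) := by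
  field_simp
  ring

lemma measurable_log_one_sub_mul (l : ℝ) : Measurable fun z : ℝ => log (1 - l * z) := by
  fun_prop

section Moments

variable {Ω : Type*} [MeasurableSpace Ω] {μ : Measure Ω} {Y : Ω → ℝ}

lemma ofReal_one_sub_le_of_measureReal_compl_le [IsProbabilityMeasure μ] {s : Set Ω} {δ : ℝ}
    (h : μ.real sᶜ ≤ δ) : ENNReal.ofReal (1 - δ) ≤ μ s := by
  have hcover : 1 ≤ μ.real s + μ.real sᶜ := by
    simpa [Set.union_compl_self] using measureReal_union_le (μ := μ) s sᶜ
  exact ENNReal.ofReal_le_of_le_toReal (by rw [← measureReal_def]; linarith)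

lemma integrable_of_integrable_sq [IsFiniteMeasure μ] (hY : AEMeasurable Y μ)
    (hY2 : Integrable (fun ω => Y ω ^ 2) μ) : Integrable Y μ :=
  ((memLp_two_iff_integrable_sq hY.aestronglyMeasurable).2 hY2).integrable one_le_two

lemma sq_integral_le_integral_sq [IsProbabilityMeasure μ] (hY : MemLp Y 2 μ) :
    (∫ ω, Y ω ∂μ) ^ 2 ≤ ∫ ω, Y ω ^ 2 ∂μ := by
  have hvar := variance_nonneg Y μ
  rw [variance_eq_sub hY] at hvar
  simp only [Pi.pow_apply] at hvar
  linarith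

end Moments

section NonposRandomVariable

variable {Ω : Type*} [MeasurableSpace Ω] {μ : Measure Ω} {Y : Ω → ℝ} {l : ℝ}

lemma integrable_sq_div_one_sub_mul (hY : AEMeasurable Y μ) (hY0 : ∀ᵐ ω ∂μ, Y ω ≤ 0)
    (hY2 : Integrable (fun ω => Y ω ^ 2) μ) (hl : 0 ≤ l) :
    Integrable (fun ω => Y ω ^ 2 / (1 - l * Y ω)) μ := by
  refine hY2.mono
    ((hY.pow_const 2).div (aemeasurable_const.sub (hY.const_mul l))).aestronglyMeasurable ?_
  filter_upwards [hY0] with ω hω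
  have hden := one_le_one_sub_mul hl hω
  rw [norm_of_nonneg (by positivity), norm_of_nonneg (by positivity)]
  exact sq_div_one_sub_mul_le_sq hl hω

lemma integral_sq_div_one_sub_mul_le_integral_sq (hY : AEMeasurable Y μ)
    (hY0 : ∀ᵐ ω ∂μ, Y ω ≤ 0) (hY2 : Integrable (fun ω => Y ω ^ 2) μ) (hl : 0 ≤ l) :
    ∫ ω, Y ω ^ 2 / (1 - l * Y ω) ∂μ ≤ ∫ ω, Y ω ^ 2 ∂μ :=
  integral_mono_ae (integrable_sq_div_one_sub_mul hY hY0 hY2 hl) hY2 <| by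
    filter_upwards [hY0] with ω hω using sq_div_one_sub_mul_le_sq hl hω

lemma integrable_exp_log_one_sub_mul [IsFiniteMeasure μ] (hY : Integrable Y μ)
    (hY0 : ∀ᵐ ω ∂μ, Y ω ≤ 0) (hl : 0 ≤ l) :
    Integrable (fun ω => exp (1 * log (1 - l * Y ω))) μ := by
  refine ((integrable_const 1).sub (hY.const_mul l)).congr ?_
  filter_upwards [hY0] with ω hω
  rw [one_mul, exp_log (by linarith [one_le_one_sub_mul hl hω])]
  rfl

lemma integrable_exp_neg_log_one_sub_mul [IsFiniteMeasure μ] (hY : AEMeasurable Y μ)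
    (hY0 : ∀ᵐ ω ∂μ, Y ω ≤ 0) (hl : 0 ≤ l) :
    Integrable (fun ω => exp (-1 * log (1 - l * Y ω))) μ := by
  refine (integrable_const (1 : ℝ)).mono ((((measurable_log_one_sub_mul l).comp_aemeasurable
    hY).const_mul (-1)).exp).aestronglyMeasurable ?_
  filter_upwards [hY0] with ω hω
  have hlog := log_nonneg (one_le_one_sub_mul hl hω)
  rw [norm_of_nonneg (exp_pos _).le, norm_one, exp_le_one_iff]
  linarith

lemma mgf_log_one_sub_mul_one [IsProbabilityMeasure μ] (hY : Integrable Y μ)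
    (hY0 : ∀ᵐ ω ∂μ, Y ω ≤ 0) (hl : 0 ≤ l) :
    mgf (fun ω => log (1 - l * Y ω)) μ 1 = 1 - l * ∫ ω, Y ω ∂μ := by
  have hexp : (fun ω => exp (1 * log (1 - l * Y ω))) =ᵐ[μ] fun ω => 1 - l * Y ω := by
    filter_upwards [hY0] with ω hω
    rw [one_mul, exp_log (by linarith [one_le_one_sub_mul hl hω])]
  rw [mgf, integral_congr_ae hexp, integral_sub (integrable_const 1) (hY.const_mul l),
    integral_const_mul]
  simp

lemma mgf_log_one_sub_mul_neg_one [IsProbabilityMeasure μ] (hY : AEMeasurable Y μ)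
    (hY0 : ∀ᵐ ω ∂μ, Y ω ≤ 0) (hY2 : Integrable (fun ω => Y ω ^ 2) μ) (hl : 0 ≤ l) :
    mgf (fun ω => log (1 - l * Y ω)) μ (-1) =
      1 + l * (∫ ω, Y ω ∂μ) + l ^ 2 * ∫ ω, Y ω ^ 2 / (1 - l * Y ω) ∂μ := by
  have hexp : (fun ω => exp (-1 * log (1 - l * Y ω))) =ᵐ[μ]
      fun ω => 1 + l * Y ω + l ^ 2 * (Y ω ^ 2 / (1 - l * Y ω)) := by
    filter_upwards [hY0] with ω hω
    have hden := one_le_one_sub_mul hl hω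
    rw [neg_one_mul, exp_neg, exp_log (by linarith), inv_one_sub_mul_eq (by linarith)]
  have hlin : Integrable (fun ω => l * Y ω) μ := (integrable_of_integrable_sq hY hY2).const_mul l
  have hquad : Integrable (fun ω => l ^ 2 * (Y ω ^ 2 / (1 - l * Y ω))) μ :=
    (integrable_sq_div_one_sub_mul hY hY0 hY2 hl).const_mul _
  have hone_add : Integrable (fun ω => 1 + l * Y ω) μ := (integrable_const 1).add hlin
  rw [mgf, integral_congr_ae hexp, integral_add hone_add hquad,
    integral_add (integrable_const 1) hlin, integral_const_mul, integral_const_mul]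
  simp

end NonposRandomVariable

namespace ProbabilityTheory

variable {Ω ι : Type*} [MeasurableSpace Ω] {μ : Measure Ω} [Fintype ι]
  {X : ι → Ω → ℝ} {X0 : Ω → ℝ} {t c : ℝ}

lemma IdentDistrib.integrable_exp_mul_iff {Y : Ω → ℝ} (h : IdentDistrib X0 Y μ μ) (t : ℝ) :
    Integrable (fun ω => exp (t * X0 ω)) μ ↔ Integrable (fun ω => exp (t * Y ω)) μ :=
  (h.comp (measurable_const_mul t).exp).integrable_iff

lemma iIndepFun.integrable_exp_mul_sum_of_identDistrib [IsFiniteMeasure μ]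
    (hindep : iIndepFun X μ) (hX : ∀ i, Measurable (X i))
    (hident : ∀ i, IdentDistrib (X i) X0 μ μ) (hint : Integrable (fun ω => exp (t * X0 ω)) μ) :
    Integrable (fun ω => exp (t * (∑ i, X i) ω)) μ :=
  hindep.integrable_exp_mul_sum hX fun i _ => ((hident i).integrable_exp_mul_iff t).2 hint

lemma iIndepFun.mgf_sum_le_exp_of_identDistrib (hindep : iIndepFun X μ)
    (hX : ∀ i, Measurable (X i)) (hident : ∀ i, IdentDistrib (X i) X0 μ μ)
    (hmgf : mgf X0 μ t ≤ exp c) :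
    mgf (∑ i, X i) μ t ≤ exp (Fintype.card ι * c) := by
  rw [hindep.mgf_sum hX, exp_nat_mul, ← Finset.card_univ, ← Finset.prod_const]
  refine Finset.prod_le_prod (fun i _ => mgf_nonneg) fun i _ => ?_
  rwa [mgf_congr_identDistrib (hident i)]

theorem iIndepFun.measureReal_sum_ge_le_exp [IsFiniteMeasure μ] (hindep : iIndepFun X μ)
    (hX : ∀ i, Measurable (X i)) (hident : ∀ i, IdentDistrib (X i) X0 μ μ) (ht : 0 ≤ t)
    (hint : Integrable (fun ω => exp (t * X0 ω)) μ) (hmgf : mgf X0 μ t ≤ exp c) (a : ℝ) :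
    μ.real {ω | a ≤ ∑ i, X i ω} ≤ exp (-t * a + Fintype.card ι * c) := by
  simp_rw [← Finset.sum_apply]
  refine (measure_ge_le_exp_mul_mgf a ht
    (hindep.integrable_exp_mul_sum_of_identDistrib hX hident hint)).trans ?_
  rw [exp_add]
  gcongr
  exact hindep.mgf_sum_le_exp_of_identDistrib hX hident hmgf

theorem iIndepFun.measureReal_sum_le_le_exp [IsFiniteMeasure μ] (hindep : iIndepFun X μ)
    (hX : ∀ i, Measurable (X i)) (hident : ∀ i, IdentDistrib (X i) X0 μ μ) (ht : t ≤ 0)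
    (hint : Integrable (fun ω => exp (t * X0 ω)) μ) (hmgf : mgf X0 μ t ≤ exp c) (a : ℝ) :
    μ.real {ω | ∑ i, X i ω ≤ a} ≤ exp (-t * a + Fintype.card ι * c) := by
  simp_rw [← Finset.sum_apply]
  refine (measure_le_le_exp_mul_mgf a ht
    (hindep.integrable_exp_mul_sum_of_identDistrib hX hident hint)).trans ?_
  rw [exp_add]
  gcongr
  exact hindep.mgf_sum_le_exp_of_identDistrib hX hident hmgf

end ProbabilityTheory

noncomputable def logSmoothingEstimator {Ω : Type*} {n : ℕ} (Z : Fin n → Ω → ℝ) (l : ℝ) (ω : Ω) :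
    ℝ :=
  -(1 / (n * l)) * ∑ i, log (1 - l * Z i ω)

@[simp]
lemma logSmoothingEstimator_zero {Ω : Type*} {n : ℕ} (Z : Fin n → Ω → ℝ) (ω : Ω) :
    logSmoothingEstimator Z 0 ω = 0 := by
  simp [logSmoothingEstimator]

section LogSmoothing

variable {Ω : Type*} [MeasurableSpace Ω] {μ : Measure Ω} [IsProbabilityMeasure μ] {n : ℕ}
  {Z : Fin n → Ω → ℝ} {Z0 : Ω → ℝ} {l : ℝ}

theorem measureReal_sum_log_one_sub_mul_ge_le (hmeas : ∀ i, Measurable (Z i))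
    (hindep : iIndepFun Z μ) (hident : ∀ i, IdentDistrib (Z i) Z0 μ μ)
    (hZ0 : ∀ᵐ ω ∂μ, Z0 ω ≤ 0) (hZint : Integrable Z0 μ) (hl : 0 ≤ l) (a : ℝ) :
    μ.real {ω | a ≤ ∑ i, log (1 - l * Z i ω)} ≤ exp (-a - n * l * ∫ ω, Z0 ω ∂μ) := by
  have hg := measurable_log_one_sub_mul l
  have hmgf : mgf (fun ω => log (1 - l * Z0 ω)) μ 1 ≤ exp (-(l * ∫ ω, Z0 ω ∂μ)) := by
    rw [mgf_log_one_sub_mul_one hZint hZ0 hl]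
    linarith [add_one_le_exp (-(l * ∫ ω, Z0 ω ∂μ))]
  refine ((hindep.comp _ fun _ => hg).measureReal_sum_ge_le_exp (fun i => hg.comp (hmeas i))
    (fun i => (hident i).comp hg) zero_le_one
    (integrable_exp_log_one_sub_mul hZint hZ0 hl) hmgf a).trans_eq ?_
  rw [Fintype.card_fin]
  congr 1
  ring

theorem measureReal_sum_log_one_sub_mul_le_le (hmeas : ∀ i, Measurable (Z i))
    (hindep : iIndepFun Z μ) (hident : ∀ i, IdentDistrib (Z i) Z0 μ μ)
    (hZ0m : AEMeasurable Z0 μ) (hZ0 : ∀ᵐ ω ∂μ, Z0 ω ≤ 0) (hZ2 : Integrable (fun ω => Z0 ω ^ 2) μ)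
    (hl : 0 ≤ l) (b : ℝ) :
    μ.real {ω | ∑ i, log (1 - l * Z i ω) ≤ b} ≤
      exp (b + n * (l * (∫ ω, Z0 ω ∂μ) + l ^ 2 * ∫ ω, Z0 ω ^ 2 / (1 - l * Z0 ω) ∂μ)) := by
  have hg := measurable_log_one_sub_mul l
  have hmgf : mgf (fun ω => log (1 - l * Z0 ω)) μ (-1) ≤
      exp (l * (∫ ω, Z0 ω ∂μ) + l ^ 2 * ∫ ω, Z0 ω ^ 2 / (1 - l * Z0 ω) ∂μ) := by
    rw [mgf_log_one_sub_mul_neg_one hZ0m hZ0 hZ2 hl]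
    linarith [add_one_le_exp (l * (∫ ω, Z0 ω ∂μ) + l ^ 2 * ∫ ω, Z0 ω ^ 2 / (1 - l * Z0 ω) ∂μ)]
  refine ((hindep.comp _ fun _ => hg).measureReal_sum_le_le_exp (fun i => hg.comp (hmeas i))
    (fun i => (hident i).comp hg) (by norm_num)
    (integrable_exp_neg_log_one_sub_mul hZ0m hZ0 hl) hmgf b).trans_eq ?_
  rw [Fintype.card_fin]
  congr 1
  ring

theorem measureReal_logSmoothingEstimator_deviation_le (hn : 0 < n)
    (hmeas : ∀ i, Measurable (Z i)) (hindep : iIndepFun Z μ)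
    (hident : ∀ i, IdentDistrib (Z i) Z0 μ μ) (hZ0 : ∀ᵐ ω ∂μ, Z0 ω ≤ 0)
    (hZ2 : Integrable (fun ω => Z0 ω ^ 2) μ) (hl : 0 < l) (ε : ℝ) :
    μ.real {ω | (∫ ω', Z0 ω' ∂μ) - logSmoothingEstimator Z l ω ≤ ε ∧
        logSmoothingEstimator Z l ω - ∫ ω', Z0 ω' ∂μ ≤
          l * (∫ ω', Z0 ω' ^ 2 / (1 - l * Z0 ω') ∂μ) + ε}ᶜ ≤ 2 * exp (-(n * l * ε)) := by
  have hZ0m : AEMeasurable Z0 μ := (hident ⟨0, hn⟩).aemeasurable_snd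
  set S : Ω → ℝ := fun ω => ∑ i, log (1 - l * Z i ω)
  have hupper : μ.real {ω | n * l * (ε - ∫ ω, Z0 ω ∂μ) ≤ S ω} ≤ exp (-(n * l * ε)) :=
    (measureReal_sum_log_one_sub_mul_ge_le hmeas hindep hident hZ0
      (integrable_of_integrable_sq hZ0m hZ2) hl.le _).trans_eq (by congr 1; ring)
  have hlower : μ.real {ω | S ω ≤ n * l * (-(∫ ω, Z0 ω ∂μ) -
      l * (∫ ω, Z0 ω ^ 2 / (1 - l * Z0 ω) ∂μ) - ε)} ≤ exp (-(n * l * ε)) :=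
    (measureReal_sum_log_one_sub_mul_le_le hmeas hindep hident hZ0m hZ0 hZ2 hl.le
      _).trans_eq (by congr 1; ring)
  have hestimator : ∀ ω, logSmoothingEstimator Z l ω = -(S ω / (n * l)) := fun ω => by
    simp only [logSmoothingEstimator, S]
    ring
  simp only [hestimator]
  clear_value S
  generalize ∫ ω, Z0 ω ∂μ = R at hupper hlower ⊢
  generalize ∫ ω, Z0 ω ^ 2 / (1 - l * Z0 ω) ∂μ = m at hupper hlower ⊢
  have hnl : 0 < n * l := by positivity
  calc μ.real {ω | R - -(S ω / (n * l)) ≤ ε ∧ -(S ω / (n * l)) - R ≤ l * m + ε}ᶜ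
      ≤ μ.real ({ω | n * l * (ε - R) ≤ S ω} ∪ {ω | S ω ≤ n * l * (-R - l * m - ε)}) := by
        refine measureReal_mono fun ω hω => ?_
        simp only [Set.mem_compl_iff, Set.mem_ofPred_eq, not_and_or, not_le,
          Set.mem_union] at hω ⊢
        rcases hω with hω | hω
        · left
          linarith [(lt_div_iff₀ hnl).1 (by linarith : ε - R < S ω / (n * l))]
        · right
          linarith [(div_lt_iff₀ hnl).1 (by linarith : S ω / (n * l) < -R - l * m - ε)]
    _ ≤ μ.real {ω | n * l * (ε - R) ≤ S ω} + μ.real {ω | S ω ≤ n * l * (-R - l * m - ε)} :=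
        measureReal_union_le _ _
    _ ≤ 2 * exp (-(n * l * ε)) := by linarith

theorem logSmoothingEstimator_tail (hn : 0 < n) (hmeas : ∀ i, Measurable (Z i))
    (hindep : iIndepFun Z μ) (hident : ∀ i, IdentDistrib (Z i) Z0 μ μ)
    (hZ0 : ∀ᵐ ω ∂μ, Z0 ω ≤ 0) (hZ2 : Integrable (fun ω => Z0 ω ^ 2) μ) (hl : 0 < l)
    {δ : ℝ} (hδ : 0 < δ) :
    ENNReal.ofReal (1 - δ) ≤
      μ {ω | (∫ ω', Z0 ω' ∂μ) - logSmoothingEstimator Z l ω ≤ log (2 / δ) / (l * n) ∧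
        logSmoothingEstimator Z l ω - ∫ ω', Z0 ω' ∂μ ≤
          l * (∫ ω', Z0 ω' ^ 2 / (1 - l * Z0 ω') ∂μ) + log (2 / δ) / (l * n)} := by
  refine ofReal_one_sub_le_of_measureReal_compl_le
    ((measureReal_logSmoothingEstimator_deviation_le hn hmeas hindep hident hZ0 hZ2 hl
      _).trans_eq ?_)
  have hn' : (0 : ℝ) < n := by exact_mod_cast hn
  rw [show n * l * (log (2 / δ) / (l * n)) = log (2 / δ) by field_simp, exp_neg,
    exp_log (by positivity), inv_div]
  ring

theorem logSmoothingEstimator_tuned_tail (hn : 0 < n) (hmeas : ∀ i, Measurable (Z i))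
    (hindep : iIndepFun Z μ) (hident : ∀ i, IdentDistrib (Z i) Z0 μ μ)
    (hZ0 : ∀ᵐ ω ∂μ, Z0 ω ≤ 0) (hZ2 : Integrable (fun ω => Z0 ω ^ 2) μ)
    {δ : ℝ} (hδ0 : 0 < δ) (hδ2 : δ < 2) :
    ENNReal.ofReal (1 - δ) ≤
      μ {ω | |(∫ ω', Z0 ω' ∂μ) -
          logSmoothingEstimator Z (√(log (2 / δ) / (n * ∫ ω', Z0 ω' ^ 2 ∂μ))) ω| ≤
        2 * √((∫ ω', Z0 ω' ^ 2 ∂μ) * log (2 / δ) / n)} := by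
  have hZ0m : AEMeasurable Z0 μ := (hident ⟨0, hn⟩).aemeasurable_snd
  have hn' : (0 : ℝ) < n := by exact_mod_cast hn
  have hL : 0 < log (2 / δ) := log_pos (by rw [lt_div_iff₀ hδ0]; linarith)
  rcases (integral_nonneg fun ω => sq_nonneg (Z0 ω) : 0 ≤ ∫ ω, Z0 ω ^ 2 ∂μ).eq_or_lt
    with hM | hM
  · -- `Z0 = 0` a.e.; the tuned parameter is the junk value `√(L / 0) = 0`, and `R̂_0 = 0`.
    have hR : ∫ ω, Z0 ω ∂μ = 0 := pow_eq_zero_iff two_ne_zero |>.1 <| le_antisymm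
      ((sq_integral_le_integral_sq ((memLp_two_iff_integrable_sq
        hZ0m.aestronglyMeasurable).2 hZ2)).trans hM.ge) (sq_nonneg _)
    rw [← hM]
    simp [hR, hδ0.le]
  · set L := log (2 / δ)
    set M := ∫ ω, Z0 ω ^ 2 ∂μ
    set l := √(L / (n * M))
    have hl : 0 < l := sqrt_pos.2 (by positivity)
    have hL_eq : L = l ^ 2 * (n * M) := by
      rw [sq_sqrt (by positivity)]
      field_simp
    have hbias : L / (l * n) = l * M := by
      rw [hL_eq]
      field_simp
    have hwidth : √(M * L / n) = l * M := by
      rw [show M * L / n = (l * M) ^ 2 by rw [hL_eq]; field_simp]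
      exact sqrt_sq (by positivity)
    have hm := integral_sq_div_one_sub_mul_le_integral_sq hZ0m hZ0 hZ2 hl.le
    refine (logSmoothingEstimator_tail hn hmeas hindep hident hZ0 hZ2 hl hδ0).trans
      (measure_mono fun ω ⟨h1, h2⟩ => ?_)
    rw [hbias] at h1 h2
    rw [Set.mem_ofPred_eq, hwidth, abs_le]
    constructor <;> nlinarith [mul_le_mul_of_nonneg_left hm hl.le, mul_nonneg hl.le hM.le]

end LogSmoothing

theorem stmt11 {Ω : Type*} [MeasurableSpace Ω] (μ : Measure Ω) [IsProbabilityMeasure μ]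
    (n : ℕ) (hn : 0 < n) (Z : Fin n → Ω → ℝ) (Z0 : Ω → ℝ)
    (hmeas : ∀ i, Measurable (Z i))
    (hindep : iIndepFun Z μ)
    (hident : ∀ i, IdentDistrib (Z i) Z0 μ μ)
    (hZ0 : ∀ᵐ ω ∂μ, Z0 ω ≤ 0)
    (hZ2 : Integrable (fun ω => Z0 ω ^ 2) μ)
    (lam : ℝ) (hlam : 0 < lam) (δ : ℝ) (hδ : δ ∈ Set.Ioc (0:ℝ) 1)
    (R : ℝ) (hR : R = ∫ ω, Z0 ω ∂μ)
    (Rhat : ℝ → Ω → ℝ)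
    (hRhat : ∀ l ω, Rhat l ω = -(1 / (n * l)) * ∑ i, Real.log (1 - l * Z i ω)) :
    (ENNReal.ofReal (1 - δ) ≤
      μ {ω | R - Rhat lam ω ≤ Real.log (2 / δ) / (lam * n) ∧
             Rhat lam ω - R ≤
               lam * (∫ ω', Z0 ω' ^ 2 / (1 - lam * Z0 ω') ∂μ) +
                 Real.log (2 / δ) / (lam * n)}) ∧
    (ENNReal.ofReal (1 - δ) ≤
      μ {ω | |R - Rhat (Real.sqrt (Real.log (2 / δ) / (n * ∫ ω', Z0 ω' ^ 2 ∂μ))) ω| ≤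
             2 * Real.sqrt ((∫ ω', Z0 ω' ^ 2 ∂μ) * Real.log (2 / δ) / n)}) := by
  obtain rfl : Rhat = logSmoothingEstimator Z := funext fun l => funext (hRhat l)
  subst hR
  exact ⟨logSmoothingEstimator_tail hn hmeas hindep hident hZ0 hZ2 hlam hδ.1,
    logSmoothingEstimator_tuned_tail hn hmeas hindep hident hZ0 hZ2 hδ.1 (by linarith [hδ.2])⟩
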